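/- arXiv:2407.06919 — 2 statements merged into one kernel-verified Lean document; each statement's English description precedes it below -/
import Mathlib

section
/- Let d ≥ 1, K ≥ 1, let n ∈ ℝ^d with ‖n‖ = 1, let V ∈ ℝ, and for each k ∈ {1,…,K} let v_k ∈ ℝ^d, ρ_k ≠ 0, c_k ∈ ℝ, and let A_k be an arbitrary real (d+1)×(K−1) matrix. Let M be the square real matrix of size (K−1)+K(d+1) with the block structure: the top-left (K−1)×(K−1) block equals V·I_{K−1}; for each k, the block in block-row k and the first block-column equals A_k and the k-th diagonal block equals the phasic coefficient matrix B(v_k,ρ_k,c_k,n); all other blocks are zero. Then for every λ ∈ ℝ, det(M − λ·I) = (V − λ)^{K−1} · ∏_{k=1}^{K} (v_k·n − λ)^{d−1}·((v_k·n − λ)² − c_k²). In particular the eigenvalues of M are V (multiplicity ≥ K−1), v_k·n (multiplicity ≥ d−1 each) and v_k·n ± c_k, k = 1,…,K. -/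
open scoped RealInnerProductSpace

/-- The phasic coefficient matrix `B(v,ρ,c,n)` of one component of the barotropic
Baer–Nunziato model in primitive variables, projected onto the direction `n`. -/
noncomputable def phasicB (d : ℕ) (v n : EuclideanSpace ℝ (Fin d)) (ρ c : ℝ) :
    Matrix (Fin d ⊕ Unit) (Fin d ⊕ Unit) ℝ :=
  Matrix.fromBlocks
    (⟪v, n⟫ • (1 : Matrix (Fin d) (Fin d) ℝ))
    (Matrix.of fun i _ => ρ⁻¹ * n i)
    (Matrix.of fun _ j => ρ * c ^ 2 * n j)
    (⟪v, n⟫ • (1 : Matrix Unit Unit ℝ))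

/-- The coefficient matrix `B_n` of the `K`-component barotropic Baer–Nunziato model
in primitive variables projected onto direction `n`: top-left block `V·I_{K-1}`,
top-right block `0`, coupling blocks `A_k` in the first block-column, and the phasic
coefficient matrices `B(v_k,ρ_k,c_k,n)` as diagonal blocks. -/
noncomputable def bnMatrix (d K : ℕ) (n : EuclideanSpace ℝ (Fin d)) (V : ℝ)
    (v : Fin K → EuclideanSpace ℝ (Fin d)) (ρ c : Fin K → ℝ)
    (A : Fin K → Matrix (Fin d ⊕ Unit) (Fin (K - 1)) ℝ) :
    Matrix (Fin (K - 1) ⊕ ((Fin d ⊕ Unit) × Fin K))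
      (Fin (K - 1) ⊕ ((Fin d ⊕ Unit) × Fin K)) ℝ :=
  Matrix.fromBlocks (V • (1 : Matrix (Fin (K - 1)) (Fin (K - 1)) ℝ)) 0
    (Matrix.of fun p j => A p.2 p.1 j)
    (Matrix.blockDiagonal fun k => phasicB d (v k) n (ρ k) (c k))

/-! `bnMatrix − λ·1` is block lower triangular, so its determinant is `(V − λ)^(K−1)` times the
determinants of the shifted phasic blocks. A shifted phasic block is `a·1` bordered by a column `u`
and a row `w`; for `a ≠ 0` its Schur complement gives `a^(d−1)(a² − w ⬝ᵥ u)`, and continuity in `a`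
removes the restriction. Here `w ⬝ᵥ u = (ρc² n) ⬝ᵥ (ρ⁻¹ n) = c²‖n‖² = c²`. -/

open Matrix

theorem fromBlocks_sub_smul_one {R l m : Type*} [Ring R] [DecidableEq l] [DecidableEq m]
    (A : Matrix l l R) (B : Matrix l m R) (C : Matrix m l R) (D : Matrix m m R) (t : R) :
    fromBlocks A B C D - t • 1 = fromBlocks (A - t • 1) B C (D - t • 1) := by
  rw [← fromBlocks_one, fromBlocks_smul, sub_eq_add_neg, fromBlocks_neg, fromBlocks_add]
  simp [sub_eq_add_neg]

theorem blockDiagonal_sub_smul_one {R m o : Type*} [Ring R] [DecidableEq m] [DecidableEq o]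
    (M : o → Matrix m m R) (t : R) :
    blockDiagonal M - t • 1 = blockDiagonal fun k => M k - t • 1 := by
  rw [← blockDiagonal_one (o := o), ← blockDiagonal_smul, ← blockDiagonal_sub]
  rfl

section BorderedScalar

variable {𝕜 ι : Type*} [Fintype ι] [DecidableEq ι] [Nonempty ι]

theorem det_fromBlocks_smul_one_replicateCol_replicateRow_of_ne_zero [Field 𝕜]
    (u w : ι → 𝕜) {a : 𝕜} (ha : a ≠ 0) :
    (fromBlocks (a • 1) (replicateCol Unit u) (replicateRow Unit w) (a • 1)).det
      = a ^ (Fintype.card ι - 1) * (a ^ 2 - w ⬝ᵥ u) := by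
  have hfactor : fromBlocks (a • 1) (replicateCol Unit u) (replicateRow Unit w) (a • 1)
      = fromBlocks (a • 1) 0 0 1
          * fromBlocks 1 (a⁻¹ • replicateCol Unit u) (replicateRow Unit w) (a • 1) := by
    rw [fromBlocks_multiply]
    simp [ha]
  obtain ⟨m, hm⟩ : ∃ m, Fintype.card ι = m + 1 := Nat.exists_eq_add_one.mpr Fintype.card_pos
  rw [hfactor, det_mul, det_fromBlocks_zero₁₂, det_fromBlocks_one₁₁, det_smul, det_one, det_one,
    det_unique, Matrix.mul_smul, replicateRow_mul_replicateCol, hm, Nat.add_sub_cancel, mul_one]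
  simp only [Matrix.sub_apply, Matrix.smul_apply, one_apply_eq, of_apply, smul_eq_mul]
  field_simp
  ring

theorem det_fromBlocks_smul_one_replicateCol_replicateRow [NontriviallyNormedField 𝕜]
    (u w : ι → 𝕜) (a : 𝕜) :
    (fromBlocks (a • 1) (replicateCol Unit u) (replicateRow Unit w) (a • 1)).det
      = a ^ (Fintype.card ι - 1) * (a ^ 2 - w ⬝ᵥ u) := by
  have h : (fun a : 𝕜 =>
        (fromBlocks (a • 1) (replicateCol Unit u) (replicateRow Unit w) (a • 1)).det)
      = fun a => a ^ (Fintype.card ι - 1) * (a ^ 2 - w ⬝ᵥ u) :=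
    Continuous.ext_on (dense_compl_singleton 0) (by fun_prop) (by fun_prop) fun _ ha =>
      det_fromBlocks_smul_one_replicateCol_replicateRow_of_ne_zero u w ha
  exact congrFun h a

end BorderedScalar

theorem phasicB_sub_smul_one (d : ℕ) (v n : EuclideanSpace ℝ (Fin d)) (ρ c t : ℝ) :
    phasicB d v n ρ c - t • 1
      = fromBlocks ((⟪v, n⟫ - t) • 1) (replicateCol Unit (ρ⁻¹ • ⇑n))
          (replicateRow Unit ((ρ * c ^ 2) • ⇑n)) ((⟪v, n⟫ - t) • 1) := by
  rw [phasicB, fromBlocks_sub_smul_one, sub_smul, sub_smul]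
  rfl

theorem det_phasicB_sub_smul_one (d : ℕ) (hd : 1 ≤ d) (v n : EuclideanSpace ℝ (Fin d))
    (hn : ‖n‖ = 1) (ρ c t : ℝ) (hρ : ρ ≠ 0) :
    (phasicB d v n ρ c - t • 1).det = (⟪v, n⟫ - t) ^ (d - 1) * ((⟪v, n⟫ - t) ^ 2 - c ^ 2) := by
  have hnn : ⇑n ⬝ᵥ ⇑n = 1 := by
    have h := real_inner_self_eq_norm_sq n
    rwa [EuclideanSpace.inner_eq_star_dotProduct, star_trivial, hn, one_pow] at h
  have : Nonempty (Fin d) := ⟨⟨0, hd⟩⟩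
  rw [phasicB_sub_smul_one, det_fromBlocks_smul_one_replicateCol_replicateRow, Fintype.card_fin,
    smul_dotProduct, dotProduct_smul, hnn, smul_smul, smul_eq_mul, mul_one, mul_right_comm,
    mul_inv_cancel₀ hρ, one_mul]

theorem bnMatrix_sub_smul_one (d K : ℕ) (n : EuclideanSpace ℝ (Fin d)) (V : ℝ)
    (v : Fin K → EuclideanSpace ℝ (Fin d)) (ρ c : Fin K → ℝ)
    (A : Fin K → Matrix (Fin d ⊕ Unit) (Fin (K - 1)) ℝ) (t : ℝ) :
    bnMatrix d K n V v ρ c A - t • 1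
      = fromBlocks ((V - t) • 1) 0 (of fun p j => A p.2 p.1 j)
          (blockDiagonal fun k => phasicB d (v k) n (ρ k) (c k) - t • 1) := by
  rw [bnMatrix, fromBlocks_sub_smul_one, sub_smul, blockDiagonal_sub_smul_one]

theorem bnMatrix_charpoly_general (d K : ℕ) (hd : 1 ≤ d)
    (n : EuclideanSpace ℝ (Fin d)) (hn : ‖n‖ = 1) (V : ℝ)
    (v : Fin K → EuclideanSpace ℝ (Fin d)) (ρ c : Fin K → ℝ) (hρ : ∀ k, ρ k ≠ 0)
    (A : Fin K → Matrix (Fin d ⊕ Unit) (Fin (K - 1)) ℝ) (lam : ℝ) :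
    (bnMatrix d K n V v ρ c A
        - lam • (1 : Matrix (Fin (K - 1) ⊕ ((Fin d ⊕ Unit) × Fin K))
            (Fin (K - 1) ⊕ ((Fin d ⊕ Unit) × Fin K)) ℝ)).det
      = (V - lam) ^ (K - 1)
          * ∏ k : Fin K,
              ((⟪v k, n⟫ - lam) ^ (d - 1) * ((⟪v k, n⟫ - lam) ^ 2 - (c k) ^ 2)) := by
  rw [bnMatrix_sub_smul_one, det_fromBlocks_zero₁₂, det_smul, det_one, mul_one, Fintype.card_fin,
    det_blockDiagonal]
  simp_rw [det_phasicB_sub_smul_one d hd _ n hn _ _ _ (hρ _)]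

/-- Characteristic polynomial of the Baer–Nunziato coefficient matrix:
`det(M − λI) = (V − λ)^(K−1) ∏_k (v_k·n − λ)^(d−1) ((v_k·n − λ)² − c_k²)`. -/
theorem bnMatrix_charpoly (d K : ℕ) (hd : 1 ≤ d) (hK : 1 ≤ K)
    (n : EuclideanSpace ℝ (Fin d)) (hn : ‖n‖ = 1) (V : ℝ)
    (v : Fin K → EuclideanSpace ℝ (Fin d)) (ρ c : Fin K → ℝ) (hρ : ∀ k, ρ k ≠ 0)
    (A : Fin K → Matrix (Fin d ⊕ Unit) (Fin (K - 1)) ℝ) (lam : ℝ) :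
    (bnMatrix d K n V v ρ c A
        - lam • (1 : Matrix (Fin (K - 1) ⊕ ((Fin d ⊕ Unit) × Fin K))
            (Fin (K - 1) ⊕ ((Fin d ⊕ Unit) × Fin K)) ℝ)).det
      = (V - lam) ^ (K - 1)
          * ∏ k : Fin K,
              ((⟪v k, n⟫ - lam) ^ (d - 1) * ((⟪v k, n⟫ - lam) ^ 2 - (c k) ^ 2)) :=
  bnMatrix_charpoly_general d K hd n hn V v ρ c hρ A lam
end

section
/- Let d ≥ 1, let n ∈ ℝ^d with ‖n‖ = 1, let P : ℝ → ℝ and ρ₀ ∈ ℝ with ρ₀ > 0, and suppose the derivative P' of P exists in a neighbourhood of ρ₀, is itself differentiable at ρ₀ with P''(ρ₀) =: P₂, and satisfies P'(ρ₀) > 0; set c₀ := √(P'(ρ₀)). Let p₀ := P(ρ₀) and let R : ℝ → ℝ satisfy R(p₀) = ρ₀ and R'(p₀) = 1/P'(ρ₀) (R is the local inverse density–pressure map), and assume P' ∘ R is well defined and positive near p₀. Define λ_± : ℝ^d × ℝ → ℝ by λ_±(v,p) := v·n ± √(P'(R(p))), and r_± := ( ±(c₀/ρ₀)·n, c₀²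 ) ∈ ℝ^{d+1}. Then λ_± is differentiable at every point (v, p₀) and its differential applied to r_± equals Dλ_±(v,p₀)[r_±] = ±(c₀/ρ₀)·( 1 + ρ₀·P₂/(2c₀²) ). In particular, if the fundamental derivative 𝒢 := 1 + ρ₀P₂/(2c₀²) is positive, this directional derivative is nonzero, i.e., the acoustic characteristic fields are genuinely nonlinear. -/
open scoped RealInnerProductSpace
open ContinuousLinearMap

/-! Along the acoustic field the density changes at rate `dρ/dp = 1/c₀²`, so the sound speed
`c̄ = √(P' ∘ R)` changes at rate `P₂ / (2c₀³)` in the pressure. The eigenvalue `v·n ± c̄` is affine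
in `v`, so its derivative along `r_± = (±(c₀/ρ₀)n, c₀²)` is
`±(c₀/ρ₀) ± c₀² · P₂/(2c₀³) = ±(c₀/ρ₀)(1 + ρ₀P₂/(2c₀²))`. -/

theorem hasDerivAt_sqrt_comp_of_hasDerivAt_inv {F R : ℝ → ℝ} {F₂ ρ₀ p₀ : ℝ}
    (hF : HasDerivAt F F₂ ρ₀) (hpos : 0 < F ρ₀) (hR₀ : R p₀ = ρ₀)
    (hR : HasDerivAt R (1 / F ρ₀) p₀) :
    HasDerivAt (fun p => √(F (R p))) (F₂ / (2 * √(F ρ₀) ^ 3)) p₀ := by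
  have hFR : HasDerivAt (fun p => F (R p)) (F₂ * (1 / F ρ₀)) p₀ := (hR₀ ▸ hF).comp p₀ hR
  convert hFR.sqrt (by rw [hR₀]; exact hpos.ne') using 1
  rw [hR₀, pow_succ, Real.sq_sqrt hpos.le]
  field_simp

section
variable {E : Type*} [NormedAddCommGroup E] [InnerProductSpace ℝ E] {n : E} {g : ℝ → ℝ} {g' p : ℝ}

theorem hasFDerivAt_inner_fst (x : E × ℝ) :
    HasFDerivAt (fun q : E × ℝ => ⟪q.1, n⟫) ((innerSL ℝ n).comp (fst ℝ E ℝ)) x := by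
  have h : (fun q : E × ℝ => ⟪q.1, n⟫) = (innerSL ℝ n).comp (fst ℝ E ℝ) := by
    ext q; simp [real_inner_comm]
  exact h ▸ ((innerSL ℝ n).comp (fst ℝ E ℝ)).hasFDerivAt

theorem hasFDerivAt_inner_add_comp_snd (hg : HasDerivAt g g' p) (v : E) :
    HasFDerivAt (fun q : E × ℝ => ⟪q.1, n⟫ + g q.2)
      ((innerSL ℝ n).comp (fst ℝ E ℝ) + g' • snd ℝ E ℝ) (v, p) :=
  (hasFDerivAt_inner_fst _).add (hg.comp_hasFDerivAt (v, p) hasFDerivAt_snd)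

theorem hasFDerivAt_inner_sub_comp_snd (hg : HasDerivAt g g' p) (v : E) :
    HasFDerivAt (fun q : E × ℝ => ⟪q.1, n⟫ - g q.2)
      ((innerSL ℝ n).comp (fst ℝ E ℝ) - g' • snd ℝ E ℝ) (v, p) :=
  (hasFDerivAt_inner_fst _).sub (hg.comp_hasFDerivAt (v, p) hasFDerivAt_snd)

theorem fderiv_inner_add_comp_snd_apply (hg : HasDerivAt g g' p) (v w : E) (s : ℝ) :
    fderiv ℝ (fun q : E × ℝ => ⟪q.1, n⟫ + g q.2) (v, p) (w, s) = ⟪w, n⟫ + s * g' := by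
  rw [(hasFDerivAt_inner_add_comp_snd hg v).fderiv]
  simp [real_inner_comm, mul_comm]

theorem fderiv_inner_sub_comp_snd_apply (hg : HasDerivAt g g' p) (v w : E) (s : ℝ) :
    fderiv ℝ (fun q : E × ℝ => ⟪q.1, n⟫ - g q.2) (v, p) (w, s) = ⟪w, n⟫ - s * g' := by
  rw [(hasFDerivAt_inner_sub_comp_snd hg v).fderiv]
  simp [real_inner_comm, mul_comm]

theorem real_inner_smul_left_self_of_norm_eq_one (hn : ‖n‖ = 1) (a : ℝ) : ⟪a • n, n⟫ = a := by
  rw [real_inner_smul_left, real_inner_self_eq_norm_sq, hn]; ring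
end

theorem acoustic_fields_genuinely_nonlinear_general (d : ℕ)
    (n : EuclideanSpace ℝ (Fin d)) (hn : ‖n‖ = 1)
    (P' : ℝ → ℝ) (ρ₀ : ℝ) (hρ₀ : 0 < ρ₀)
    (hP'pos : 0 < P' ρ₀) (P₂ : ℝ) (hP₂ : HasDerivAt P' P₂ ρ₀)
    (c₀ p₀ : ℝ) (hc₀ : c₀ = Real.sqrt (P' ρ₀))
    (R : ℝ → ℝ) (hR₀ : R p₀ = ρ₀) (hR' : HasDerivAt R (1 / P' ρ₀) p₀) :
    ∀ v : EuclideanSpace ℝ (Fin d),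
      (DifferentiableAt ℝ
          (fun q : EuclideanSpace ℝ (Fin d) × ℝ =>
            ⟪q.1, n⟫ + Real.sqrt (P' (R q.2))) (v, p₀)) ∧
      (fderiv ℝ (fun q : EuclideanSpace ℝ (Fin d) × ℝ =>
            ⟪q.1, n⟫ + Real.sqrt (P' (R q.2))) (v, p₀) ((c₀ / ρ₀) • n, c₀ ^ 2)
        = (c₀ / ρ₀) * (1 + ρ₀ * P₂ / (2 * c₀ ^ 2))) ∧
      (DifferentiableAt ℝ
          (fun q : EuclideanSpace ℝ (Fin d) × ℝ =>
            ⟪q.1, n⟫ - Real.sqrt (P' (R q.2))) (v, p₀)) ∧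
      (fderiv ℝ (fun q : EuclideanSpace ℝ (Fin d) × ℝ =>
            ⟪q.1, n⟫ - Real.sqrt (P' (R q.2))) (v, p₀) (-(c₀ / ρ₀) • n, c₀ ^ 2)
        = -((c₀ / ρ₀) * (1 + ρ₀ * P₂ / (2 * c₀ ^ 2)))) ∧
      (0 < 1 + ρ₀ * P₂ / (2 * c₀ ^ 2) →
        fderiv ℝ (fun q : EuclideanSpace ℝ (Fin d) × ℝ =>
            ⟪q.1, n⟫ + Real.sqrt (P' (R q.2))) (v, p₀) ((c₀ / ρ₀) • n, c₀ ^ 2) ≠ 0) := by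
  intro v
  have hc : HasDerivAt (fun p => √(P' (R p))) (P₂ / (2 * c₀ ^ 3)) p₀ :=
    hc₀ ▸ hasDerivAt_sqrt_comp_of_hasDerivAt_inv hP₂ hP'pos hR₀ hR'
  have hc₀pos : 0 < c₀ := hc₀ ▸ Real.sqrt_pos.mpr hP'pos
  have hrate : c₀ ^ 2 * (P₂ / (2 * c₀ ^ 3)) = c₀ / ρ₀ * (ρ₀ * P₂ / (2 * c₀ ^ 2)) := by
    field_simp
  have hplus := fderiv_inner_add_comp_snd_apply (n := n) hc v ((c₀ / ρ₀) • n) (c₀ ^ 2)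
  have hminus := fderiv_inner_sub_comp_snd_apply (n := n) hc v (-(c₀ / ρ₀) • n) (c₀ ^ 2)
  simp only [real_inner_smul_left_self_of_norm_eq_one hn, hrate, ← mul_one_add] at hplus hminus
  refine ⟨(hasFDerivAt_inner_add_comp_snd hc v).differentiableAt, hplus,
    (hasFDerivAt_inner_sub_comp_snd hc v).differentiableAt, by rw [hminus]; ring,
    fun hG => by rw [hplus]; positivity⟩

/-- Genuine nonlinearity of the acoustic fields of a barotropic fluid: for a pressure
law `P` with `P'(ρ₀) > 0`, `P''(ρ₀) = P₂`, sound speed `c₀ = √(P'(ρ₀))` and local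
inverse `R` of the density–pressure map, the eigenvalues `λ_±(v,p) = v·n ± √(P'(R(p)))`
are differentiable at `(v,p₀)` and their derivatives along the acoustic eigenvectors
`r_± = (±(c₀/ρ₀)n, c₀²)` equal `±(c₀/ρ₀)(1 + ρ₀P₂/(2c₀²))`; in particular they are
nonzero when the fundamental derivative `𝒢 = 1 + ρ₀P₂/(2c₀²)` is positive. -/
theorem acoustic_fields_genuinely_nonlinear (d : ℕ) (hd : 1 ≤ d)
    (n : EuclideanSpace ℝ (Fin d)) (hn : ‖n‖ = 1)
    (P P' : ℝ → ℝ) (ρ₀ : ℝ) (hρ₀ : 0 < ρ₀)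
    (hP : ∀ᶠ ρ in nhds ρ₀, HasDerivAt P (P' ρ) ρ)
    (hP'pos : 0 < P' ρ₀) (P₂ : ℝ) (hP₂ : HasDerivAt P' P₂ ρ₀)
    (c₀ p₀ : ℝ) (hc₀ : c₀ = Real.sqrt (P' ρ₀)) (hp₀ : p₀ = P ρ₀)
    (R : ℝ → ℝ) (hR₀ : R p₀ = ρ₀) (hR' : HasDerivAt R (1 / P' ρ₀) p₀)
    (hposR : ∀ᶠ p in nhds p₀, 0 < P' (R p)) :
    ∀ v : EuclideanSpace ℝ (Fin d),
      (DifferentiableAt ℝ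
          (fun q : EuclideanSpace ℝ (Fin d) × ℝ =>
            ⟪q.1, n⟫ + Real.sqrt (P' (R q.2))) (v, p₀)) ∧
      (fderiv ℝ (fun q : EuclideanSpace ℝ (Fin d) × ℝ =>
            ⟪q.1, n⟫ + Real.sqrt (P' (R q.2))) (v, p₀) ((c₀ / ρ₀) • n, c₀ ^ 2)
        = (c₀ / ρ₀) * (1 + ρ₀ * P₂ / (2 * c₀ ^ 2))) ∧
      (DifferentiableAt ℝ
          (fun q : EuclideanSpace ℝ (Fin d) × ℝ =>
            ⟪q.1, n⟫ - Real.sqrt (P' (R q.2))) (v, p₀)) ∧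
      (fderiv ℝ (fun q : EuclideanSpace ℝ (Fin d) × ℝ =>
            ⟪q.1, n⟫ - Real.sqrt (P' (R q.2))) (v, p₀) (-(c₀ / ρ₀) • n, c₀ ^ 2)
        = -((c₀ / ρ₀) * (1 + ρ₀ * P₂ / (2 * c₀ ^ 2)))) ∧
      (0 < 1 + ρ₀ * P₂ / (2 * c₀ ^ 2) →
        fderiv ℝ (fun q : EuclideanSpace ℝ (Fin d) × ℝ =>
            ⟪q.1, n⟫ + Real.sqrt (P' (R q.2))) (v, p₀) ((c₀ / ρ₀) • n, c₀ ^ 2) ≠ 0) :=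
  acoustic_fields_genuinely_nonlinear_general d n hn P' ρ₀ hρ₀ hP'pos P₂ hP₂ c₀ p₀ hc₀ R hR₀ hR'
end
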